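/- (Compositional computation of the QBUA weakest precondition) For all commands C1, C2 and every resource function Q: pre(C1; C2, Q) = pre(C1, pre(C2, Q)), and pre(C1 + C2, Q) = pre(C1, Q) ⋎ pre(C2, Q), where (P ⋎ P′)(σ) = max(P(σ), P′(σ)) and pre(C, Q)(σ) = sup { p ∈ ℤ : ∃τ, q, q ≤ Q(τ) and C, σ, p ⇓ τ, q } (supremum taken in ℤ ∪ {−∞, +∞}, with sup ∅ = −∞). -/
import Mathlib


/-! Basic language: variables, states, semantic expressions, resource values. -/

abbrev Var := String
abbrev State := Var → ℤ
abbrev AExp := State → ℤ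
abbrev BExp := State → Bool

/-- Resource values: ℤ ∪ {−∞, +∞}. -/
abbrev RVal := WithTop (WithBot ℤ)
/-- Resource functions. -/
abbrev RF := State → RVal

/-- Embedding of an integer into `RVal`. -/
def iv (n : ℤ) : RVal := ((n : WithBot ℤ) : RVal)

/-- State update. -/
def upd (σ : State) (x : Var) (v : ℤ) : State := fun y => if y = x then v else σ y

/-- Commands of the IMP-like language. -/
inductive Cmd where
  | skip
  | assign (x : Var) (e : AExp)
  | assume' (b : BExp)
  | tick (e : AExp)
  | seq (c₁ c₂ : Cmd)
  | choice (c₁ c₂ : Cmd)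
  | star (c : Cmd)
  | local' (x : Var) (c : Cmd)

/-- Resource-aware big-step semantics: `BigStep C σ p l τ q` is C, σ, p ⇓_l τ, q. -/
inductive BigStep : Cmd → State → ℤ → ℤ → State → ℤ → Prop where
  | skip {σ p} : BigStep .skip σ p p σ p
  | assign {x e σ p} : BigStep (.assign x e) σ p p (upd σ x (e σ)) p
  | assume' {b : BExp} {σ p} : b σ = true → BigStep (.assume' b) σ p p σ p
  | tick {e σ p} : BigStep (.tick e) σ p (min p (p - e σ)) σ (p - e σ)
  | seq {c₁ c₂ σ p l₁ ρ r l₂ τ q} : BigStep c₁ σ p l₁ ρ r → BigStep c₂ ρ r l₂ τ q →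
      BigStep (.seq c₁ c₂) σ p (min l₁ l₂) τ q
  | choiceL {c₁ c₂ σ p l τ q} : BigStep c₁ σ p l τ q → BigStep (.choice c₁ c₂) σ p l τ q
  | choiceR {c₁ c₂ σ p l τ q} : BigStep c₂ σ p l τ q → BigStep (.choice c₁ c₂) σ p l τ q
  | starZero {c σ p} : BigStep (.star c) σ p p σ p
  | starStep {c σ p l τ q} : BigStep (.seq c (.star c)) σ p l τ q → BigStep (.star c) σ p l τ q
  | local' {x c σ p l τ q} (v : ℤ) : BigStep c σ p l τ q →
      BigStep (.local' x c) (upd σ x v) p l (upd τ x v) q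

/-- C, σ, p ⇓ τ, q. -/
def BigStepP (c : Cmd) (σ : State) (p : ℤ) (τ : State) (q : ℤ) : Prop :=
  ∃ l, BigStep c σ p l τ q

/-- C, σ, p ⇓≤0 τ, q. -/
def BigStepL (c : Cmd) (σ : State) (p : ℤ) (τ : State) (q : ℤ) : Prop :=
  ∃ l ≤ 0, BigStep c σ p l τ q

/-- `Indep f S`: the state function `f` does not depend on the variables in `S`
(i.e. fv(f) ∩ S = ∅). -/
def Indep {α : Type _} (f : State → α) (S : Set Var) : Prop :=
  ∀ σ σ' : State, (∀ y ∉ S, σ y = σ' y) → f σ = f σ'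

/-- `Fresh y f`: the variable `y` is not free in the state function `f`. -/
def Fresh {α : Type _} (y : Var) (f : State → α) : Prop :=
  ∀ σ v, f (upd σ y v) = f σ

/-- The set of variables possibly modified by a command. -/
def modVars : Cmd → Set Var
  | .skip => ∅
  | .assign x _ => {x}
  | .assume' _ => ∅
  | .tick _ => ∅
  | .seq c₁ c₂ => modVars c₁ ∪ modVars c₂
  | .choice c₁ c₂ => modVars c₁ ∪ modVars c₂
  | .star c => modVars c
  | .local' x c => modVars c \ {x}

/-- Substitution e[y/x] on semantic expressions. -/
def esubst {α : Type _} (e : State → α) (x y : Var) : State → α :=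
  fun σ => e (upd σ x (σ y))

/-- `y` is not free in the command `C`. -/
def freshC (y : Var) : Cmd → Prop
  | .skip => True
  | .assign z e => y ≠ z ∧ Fresh y e
  | .assume' b => Fresh y b
  | .tick e => Fresh y e
  | .seq c₁ c₂ => freshC y c₁ ∧ freshC y c₂
  | .choice c₁ c₂ => freshC y c₁ ∧ freshC y c₂
  | .star c => freshC y c
  | .local' z c => y = z ∨ freshC y c

/-- Substitution C[y/x]: rename every free occurrence of `x` in `C` to `y`. -/
def csubst : Cmd → Var → Var → Cmd
  | .skip, _, _ => .skip
  | .assign z e, x, y => .assign (if z = x then y else z) (esubst e x y)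
  | .assume' b, x, y => .assume' (esubst b x y)
  | .tick e, x, y => .tick (esubst e x y)
  | .seq c₁ c₂, x, y => .seq (csubst c₁ x y) (csubst c₂ x y)
  | .choice c₁ c₂, x, y => .choice (csubst c₁ x y) (csubst c₂ x y)
  | .star c, x, y => .star (csubst c x y)
  | .local' z c, x, y => if z = x then .local' z c else .local' z (csubst c x y)

/-- Bounded iteration: C⁰ = skip, C^(n+1) = C; Cⁿ. -/
def iter (c : Cmd) : ℕ → Cmd
  | 0 => .skip
  | n + 1 => .seq c (iter c n)

/-- Pointwise order on resource functions. -/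
def rle (P Q : RF) : Prop := ∀ σ, P σ ≤ Q σ

/-- [B]: +∞ if B holds, −∞ otherwise. -/
def bnd (b : BExp) : RF := fun σ => if b σ then ⊤ else ⊥

/-- `P` is finitely supported: it depends on only finitely many variables. -/
def FinSupp (P : RF) : Prop := ∃ S : Finset Var, Indep P ((↑S : Set Var)ᶜ)

/-- Semantic equivalence of commands. -/
def CEquiv (c c' : Cmd) : Prop := ∀ σ p l τ q, BigStep c σ p l τ q ↔ BigStep c' σ p l τ q

/-- QFUA validity ⊨F [P] C [Q]. -/
def FValid (P : RF) (c : Cmd) (Q : RF) : Prop :=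
  ∀ τ (q : ℤ), Q τ ≤ iv q → ∃ σ, ∃ p : ℤ, P σ ≤ iv p ∧ BigStepP c σ p τ q

/-- QBUA validity ⊨B [P] C [Q]. -/
def BValid (P : RF) (c : Cmd) (Q : RF) : Prop :=
  ∀ σ (p : ℤ), iv p ≤ P σ → ∃ τ, ∃ q : ℤ, iv q ≤ Q τ ∧ BigStepP c σ p τ q

/-- QBUA◇ validity ⊨B◇ [P] C [Q]. -/
def DValid (P : RF) (c : Cmd) (Q : RF) : Prop :=
  ∀ σ (p : ℤ), iv p ≤ P σ → ∃ τ, ∃ q : ℤ, iv q ≤ Q τ ∧ BigStepL c σ p τ q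

/-- Quantitative weakest precondition (sup ∅ = −∞). -/
noncomputable def pre (c : Cmd) (Q : RF) : RF :=
  fun σ => sSup (iv '' {p : ℤ | ∃ τ, ∃ q : ℤ, iv q ≤ Q τ ∧ BigStepP c σ p τ q})


lemma iv_le_iv {a b : ℤ} : iv a ≤ iv b ↔ a ≤ b := by
  simp [iv]

lemma BigStep.shift {c σ p l τ q} (h : BigStep c σ p l τ q) (d : ℤ) :
    BigStep c σ (p + d) (l + d) τ (q + d) := by
  induction h with
  | skip => exact .skip
  | assign => exact .assign
  | assume' h => exact .assume' h
  | @tick e σ p =>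
      have h1 : min p (p - e σ) + d = min (p + d) ((p + d) - e σ) := by
        rcases le_total p (p - e σ) with h | h <;> omega
      have h2 : p - e σ + d = (p + d) - e σ := by ring
      rw [h1, h2]; exact .tick
  | seq h1 h2 ih1 ih2 =>
      rw [show ∀ a b : ℤ, min a b + d = min (a + d) (b + d) from fun a b => by
        rcases le_total a b with h | h <;> omega]
      exact .seq ih1 ih2
  | choiceL _ ih => exact .choiceL ih
  | choiceR _ ih => exact .choiceR ih
  | starZero => exact .starZero
  | starStep _ ih => exact .starStep ih
  | local' v _ ih => exact .local' v ih

lemma mem_down {c σ} {Q : RF} {p p' : ℤ}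
    (hp : ∃ τ, ∃ q : ℤ, iv q ≤ Q τ ∧ BigStepP c σ p τ q) (h : p' ≤ p) :
    ∃ τ, ∃ q : ℤ, iv q ≤ Q τ ∧ BigStepP c σ p' τ q := by
  obtain ⟨τ, q, hq, l, hb⟩ := hp
  refine ⟨τ, q + (p' - p), le_trans (iv_le_iv.mpr (by omega)) hq, l + (p' - p), ?_⟩
  have := BigStep.shift hb (p' - p)
  simpa using this

lemma exists_ge {S : Set ℤ} {r : ℤ} (h : iv r ≤ sSup (iv '' S)) : ∃ s ∈ S, r ≤ s := by
  by_contra hc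
  push_neg at hc
  have hub : sSup (iv '' S) ≤ iv (r - 1) := by
    apply sSup_le
    rintro x ⟨s, hs, rfl⟩
    exact iv_le_iv.mpr (by have := hc s hs; omega)
  have : (r : ℤ) ≤ r - 1 := iv_le_iv.mp (le_trans h hub)
  omega


theorem pre_seq_choice (C₁ C₂ : Cmd) (Q : RF) :
    pre (.seq C₁ C₂) Q = pre C₁ (pre C₂ Q) ∧
    pre (.choice C₁ C₂) Q = fun σ => max (pre C₁ Q σ) (pre C₂ Q σ) := by
  constructor
  · funext σ
    unfold pre
    have hset : {p : ℤ | ∃ τ, ∃ q : ℤ, iv q ≤ Q τ ∧ BigStepP (.seq C₁ C₂) σ p τ q} =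
        {p : ℤ | ∃ ρ, ∃ r : ℤ,
          iv r ≤ sSup (iv '' {p : ℤ | ∃ τ, ∃ q : ℤ, iv q ≤ Q τ ∧ BigStepP C₂ ρ p τ q}) ∧
          BigStepP C₁ σ p ρ r} := by
      ext p
      simp only [Set.mem_setOf_eq]
      constructor
      · rintro ⟨τ, q, hq, l, hb⟩
        cases hb with
        | @seq _ _ _ _ l₁ ρ r l₂ _ _ h1 h2 =>
            refine ⟨ρ, r, ?_, l₁, h1⟩
            exact le_sSup ⟨_, ⟨_, _, hq, _, h2⟩, rfl⟩
      · rintro ⟨ρ, r, hr, l, h1⟩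
        obtain ⟨s, hs, hrs⟩ := exists_ge hr
        obtain ⟨τ, q, hq, l2, h2⟩ := mem_down hs hrs
        exact ⟨τ, q, hq, _, .seq h1 h2⟩
    rw [hset]
  · funext σ
    unfold pre
    have : {p : ℤ | ∃ τ, ∃ q : ℤ, iv q ≤ Q τ ∧ BigStepP (.choice C₁ C₂) σ p τ q} =
        {p : ℤ | ∃ τ, ∃ q : ℤ, iv q ≤ Q τ ∧ BigStepP C₁ σ p τ q} ∪
        {p : ℤ | ∃ τ, ∃ q : ℤ, iv q ≤ Q τ ∧ BigStepP C₂ σ p τ q} := by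
      ext p
      simp only [Set.mem_setOf_eq, Set.mem_union]
      constructor
      · rintro ⟨τ, q, hq, l, hb⟩
        cases hb with
        | choiceL h => exact Or.inl ⟨τ, q, hq, _, h⟩
        | choiceR h => exact Or.inr ⟨τ, q, hq, _, h⟩
      · rintro (⟨τ, q, hq, l, h⟩ | ⟨τ, q, hq, l, h⟩)
        · exact ⟨τ, q, hq, _, .choiceL h⟩
        · exact ⟨τ, q, hq, _, .choiceR h⟩
    rw [this, Set.image_union, sSup_union]
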